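/- arXiv:2407.14764 — 2 statements merged into one kernel-verified Lean document; each statement's English description precedes it below -/
import Mathlib

section
/- Let S be a nonnegative integer k × l matrix in which no row is a nonnegative real combination of the other rows and no column is a nonnegative real combination of the other columns. Then S is the slack matrix of some positive affine semigroup if and only if the normalization of Γ_S^row equals ℤ₊^l ∩ Row(S) and Γ_S^col = ℤ₊^k ∩ Col(S). -/
/-!
Write `Γ = ⟨a_i⟩` and `Γ* = ⟨b_j⟩`, so that `S i j = ⟨a_i, b_j⟩`: the rows of `S` are the images
of the `a_i` under `x ↦ (⟨x, b_j⟩)_j` and the columns the images of the `b_j` under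
`w ↦ (⟨a_i, w⟩)_i`.

Forward. A point of `ℤ₊^k ∩ Col(S)` is the image of some `w ∈ span Γ` pairing into `ℕ` with every
`a_i`, that is of some `w ∈ Γ*`, hence of an `ℕ`-combination of the `b_j`. A point of
`ℤ₊^l ∩ Row(S)` is the image of some `x ∈ span Γ` pairing into `ℕ` with all of `Γ*`. Shifting by
multiples of `∑ b_j`, which pairs positively with every `a_i`, gives `(Λ_Γ)* = Γ* - Γ*`; so `x`
pairs integrally with `(Λ_Γ)*` and lies in `Λ_Γ` by lattice duality. Farkas' lemma over `ℚ`, in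
integer coordinates with respect to a basis of `Λ_Γ`, then puts `x` in `K_Γ`.

Backward. Take `Γ = Γ_S^row`. Its dual consists of the `w ∈ Row(S)` with
`S w ∈ ℤ₊^k ∩ Col(S) = Γ_S^col`; since `w ↦ S w` is injective on `Row(S)`, `Γ*` is generated by
the preimages `b_j` in `Row(S)` of the columns. Conic independence of the rows and of the columns
makes both generating sets minimal.
-/

open Matrix BigOperators

noncomputable section

/-- The ambient space `ℝ^n`. -/
abbrev V (n : ℕ) := Fin n → ℝ

/-- The difference set `Λ_Γ = {x - y : x, y ∈ Γ}` of a set `Γ ⊆ ℝ^n`. -/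
def diffSet {n : ℕ} (Γ : Set (V n)) : Set (V n) := {z | ∃ x ∈ Γ, ∃ y ∈ Γ, z = x - y}

/-- A set is discrete if each of its points is isolated in it. -/
def IsDiscreteSet {n : ℕ} (Λ : Set (V n)) : Prop :=
  ∀ x ∈ Λ, ∃ ε : ℝ, 0 < ε ∧ ∀ y ∈ Λ, dist y x < ε → y = x

/-- An affine semigroup: a finitely generated additive submonoid of `ℝ^n` whose
difference group is discrete (a lattice). -/
def IsAffineSemigroup {n : ℕ} (Γ : Set (V n)) : Prop :=
  (∃ S : Finset (V n), (AddSubmonoid.closure (S : Set (V n)) : Set (V n)) = Γ) ∧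
    IsDiscreteSet (diffSet Γ)

/-- A set is positive if `0` is its only element whose negative also belongs to it. -/
def IsPositive {n : ℕ} (Γ : Set (V n)) : Prop := ∀ x ∈ Γ, -x ∈ Γ → x = 0

/-- The convex cone `K_Γ` of all nonnegative real combinations of elements of `Γ`. -/
def coneOf {n : ℕ} (Γ : Set (V n)) : Set (V n) :=
  {y | ∃ (k : ℕ) (c : Fin k → ℝ) (v : Fin k → V n),
    (∀ i, 0 ≤ c i) ∧ (∀ i, v i ∈ Γ) ∧ y = ∑ i, c i • v i}

/-- The dual cone `K* = {y : ⟨x,y⟩ ≥ 0 for all x ∈ K}`. -/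
def dualCone {n : ℕ} (K : Set (V n)) : Set (V n) := {y | ∀ x ∈ K, 0 ≤ x ⬝ᵥ y}

/-- The dual lattice `Λ* = {w ∈ span(Λ) : ⟨w,v⟩ ∈ ℤ for all v ∈ Λ}`. -/
def dualLattice {n : ℕ} (Λ : Set (V n)) : Set (V n) :=
  {w | w ∈ Submodule.span ℝ Λ ∧ ∀ v ∈ Λ, ∃ m : ℤ, w ⬝ᵥ v = (m : ℝ)}

/-- The dual affine semigroup `Γ* = (Λ_Γ)* ∩ (K_Γ)*`. -/
def dualSemigroup {n : ℕ} (Γ : Set (V n)) : Set (V n) :=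
  dualLattice (diffSet Γ) ∩ dualCone (coneOf Γ)

/-- `A` generates the additive monoid `Γ`. -/
def IsGenSet {n : ℕ} (A Γ : Set (V n)) : Prop := (AddSubmonoid.closure A : Set (V n)) = Γ

/-- `A` is a minimal generating set of the additive monoid `Γ`: it generates, and no
proper subset of it generates. -/
def IsMinGenSet {n : ℕ} (A Γ : Set (V n)) : Prop :=
  IsGenSet A Γ ∧ ∀ B ⊂ A, ¬ IsGenSet B Γ

/-- `S` is the slack matrix of the positive affine semigroup `Γ`: its `(i,j)` entry is
`⟨a i, b j⟩` where `a`, `b` enumerate the minimal generating sets of `Γ` and `Γ*`. -/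
def IsSlackMatrix {n k l : ℕ} (Γ : Set (V n)) (S : Matrix (Fin k) (Fin l) ℤ) : Prop :=
  ∃ (a : Fin k → V n) (b : Fin l → V n),
    Function.Injective a ∧ Function.Injective b ∧
    IsMinGenSet (Set.range a) Γ ∧ IsMinGenSet (Set.range b) (dualSemigroup Γ) ∧
    ∀ i j, (S i j : ℝ) = a i ⬝ᵥ b j

/-- The `i`-th row of an integer matrix, viewed as a real vector. -/
def rowVec {k l : ℕ} (S : Matrix (Fin k) (Fin l) ℤ) (i : Fin k) : V l := fun j => (S i j : ℝ)

/-- The `j`-th column of an integer matrix, viewed as a real vector. -/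
def colVec {k l : ℕ} (S : Matrix (Fin k) (Fin l) ℤ) (j : Fin l) : V k := fun i => (S i j : ℝ)

/-- `Γ_S^row`: all nonnegative integer combinations of the rows of `S`. -/
def GammaRow {k l : ℕ} (S : Matrix (Fin k) (Fin l) ℤ) : Set (V l) :=
  {x | ∃ c : Fin k → ℕ, x = ∑ i, (c i : ℝ) • rowVec S i}

/-- `Γ_S^col`: all nonnegative integer combinations of the columns of `S`. -/
def GammaCol {k l : ℕ} (S : Matrix (Fin k) (Fin l) ℤ) : Set (V k) :=
  {x | ∃ c : Fin l → ℕ, x = ∑ j, (c j : ℝ) • colVec S j}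

/-- `Λ_S^row`: all integer combinations of the rows of `S`. -/
def LambdaRow {k l : ℕ} (S : Matrix (Fin k) (Fin l) ℤ) : Set (V l) :=
  {x | ∃ c : Fin k → ℤ, x = ∑ i, (c i : ℝ) • rowVec S i}

/-- `Λ_S^col`: all integer combinations of the columns of `S`. -/
def LambdaCol {k l : ℕ} (S : Matrix (Fin k) (Fin l) ℤ) : Set (V k) :=
  {x | ∃ c : Fin l → ℤ, x = ∑ j, (c j : ℝ) • colVec S j}

/-- `K_S^row`: all nonnegative real combinations of the rows of `S`. -/
def KRow {k l : ℕ} (S : Matrix (Fin k) (Fin l) ℤ) : Set (V l) :=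
  {x | ∃ c : Fin k → ℝ, (∀ i, 0 ≤ c i) ∧ x = ∑ i, c i • rowVec S i}

/-- `K_S^col`: all nonnegative real combinations of the columns of `S`. -/
def KCol {k l : ℕ} (S : Matrix (Fin k) (Fin l) ℤ) : Set (V k) :=
  {x | ∃ c : Fin l → ℝ, (∀ j, 0 ≤ c j) ∧ x = ∑ j, c j • colVec S j}

/-- `Row(S)`: the row space of `S` over `ℝ`. -/
def RowSpace {k l : ℕ} (S : Matrix (Fin k) (Fin l) ℤ) : Set (V l) :=
  (Submodule.span ℝ (Set.range (rowVec S)) : Set (V l))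

/-- `Col(S)`: the column space of `S` over `ℝ`. -/
def ColSpace {k l : ℕ} (S : Matrix (Fin k) (Fin l) ℤ) : Set (V k) :=
  (Submodule.span ℝ (Set.range (colVec S)) : Set (V k))

/-- `ℤ^l` viewed inside `ℝ^l`. -/
def intPts (l : ℕ) : Set (V l) := {x | ∀ j, ∃ m : ℤ, x j = (m : ℝ)}

/-- `ℤ₊^l` viewed inside `ℝ^l`. -/
def nnIntPts (l : ℕ) : Set (V l) := {x | ∀ j, ∃ m : ℕ, x j = (m : ℝ)}

/-- `ℝ₊^l`: the nonnegative orthant. -/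
def nnPts (l : ℕ) : Set (V l) := {x | ∀ j, 0 ≤ x j}

/-- `ι` (a linear map restricting to an additive semigroup homomorphism `Γ → Γ'`) is a
lift of the positive affine semigroup `Γ`: `Γ'` is a positive affine semigroup and the
adjoint `ι*` (characterized on `Γ` by `⟨x, ι*(y)⟩ = ⟨ι(x), y⟩`) satisfies
`ι*(Γ'*) = Γ*`. -/
structure IsLift {n N : ℕ} (Γ : Set (V n)) (Γ' : Set (V N)) (ι : (V n) →ₗ[ℝ] (V N)) : Prop where
  lift_semigroup : IsAffineSemigroup Γ'
  lift_positive : IsPositive Γ'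
  maps_to : ∀ x ∈ Γ, ι x ∈ Γ'
  adjoint_mem : ∀ y ∈ dualSemigroup Γ', ∃ z ∈ dualSemigroup Γ, ∀ x ∈ Γ, x ⬝ᵥ z = (ι x) ⬝ᵥ y
  adjoint_surj : ∀ z ∈ dualSemigroup Γ, ∃ y ∈ dualSemigroup Γ', ∀ x ∈ Γ, x ⬝ᵥ z = (ι x) ⬝ᵥ y

/-- The nonnegative integer rank: the least inner dimension of a factorization
`A = B * C` with `B`, `C` nonnegative integer matrices. -/
def nnIntRank {m l : Type*} [Fintype m] [Fintype l] (A : Matrix m l ℤ) : ℕ :=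
  sInf {r : ℕ | ∃ (B : Matrix m (Fin r) ℤ) (C : Matrix (Fin r) l ℤ),
    (∀ i j, 0 ≤ B i j) ∧ (∀ i j, 0 ≤ C i j) ∧ A = B * C}

/-- The nonnegative rank: the least inner dimension of a factorization
`A = B * C` with `B`, `C` nonnegative real matrices. -/
def nnRank {m l : Type*} [Fintype m] [Fintype l] (A : Matrix m l ℤ) : ℕ :=
  sInf {r : ℕ | ∃ (B : Matrix m (Fin r) ℝ) (C : Matrix (Fin r) l ℝ),
    (∀ i j, 0 ≤ B i j) ∧ (∀ i j, 0 ≤ C i j) ∧ A.map (fun z => (z : ℝ)) = B * C}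

/-- The Fibonacci semigroup `Γ^Fib_n = ℤ² ∩ {(x,y) : 0 ≤ F_{2n}·y ≤ F_{2n+2}·x}`
(with `Nat.fib`, so `F 1 = F 2 = 1`). -/
def GammaFib (n : ℕ) : Set (V 2) :=
  {p | (∃ a : ℤ, p 0 = (a : ℝ)) ∧ (∃ b : ℤ, p 1 = (b : ℝ)) ∧
    0 ≤ (Nat.fib (2 * n) : ℝ) * p 1 ∧
    (Nat.fib (2 * n) : ℝ) * p 1 ≤ (Nat.fib (2 * n + 2) : ℝ) * p 0}

/-- Fibonacci numbers extended to negative indices by `F_{-m} = (-1)^{m+1} F_m`. -/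
def fibZ (m : ℤ) : ℤ :=
  if 0 ≤ m then (Nat.fib m.toNat : ℤ)
  else (-1) ^ ((-m).toNat + 1) * (Nat.fib (-m).toNat : ℤ)

/-- The `(n+1) × (n+1)` Toeplitz matrix with `(i,j)` entry `F_{2(i-j)+1}`. -/
def Mfib (n : ℕ) : Matrix (Fin (n + 1)) (Fin (n + 1)) ℤ :=
  fun i j => fibZ (2 * ((i : ℤ) - (j : ℤ)) + 1)

/-- `‖A‖₁`: the sum of all entries of a matrix. -/
def entrySum {m l : Type*} [Fintype m] [Fintype l] (A : Matrix m l ℤ) : ℤ := ∑ i, ∑ j, A i j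


section Generators

variable {n M : ℕ}

lemma mem_closure_range_iff (v : Fin M → V n) {x : V n} :
    x ∈ AddSubmonoid.closure (Set.range v) ↔ ∃ c : Fin M → ℕ, x = ∑ i, (c i : ℝ) • v i := by
  simp only [AddSubmonoid.mem_closure_range_iff_of_fintype, Nat.cast_smul_eq_nsmul]

lemma diffSet_closure (s : Set (V n)) :
    diffSet (AddSubmonoid.closure s : Set (V n)) = Submodule.span ℤ s := by
  ext x
  constructor
  · rintro ⟨p, hp, q, hq, rfl⟩
    have hle : AddSubmonoid.closure s ≤ (Submodule.span ℤ s).toAddSubmonoid :=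
      AddSubmonoid.closure_le.mpr Submodule.subset_span
    exact sub_mem (hle hp) (hle hq)
  · intro hx
    rw [SetLike.mem_coe, ← Submodule.mem_toAddSubgroup,
      Submodule.span_int_eq_addSubgroupClosure] at hx
    induction hx using AddSubgroup.closure_induction with
    | mem x hx => exact ⟨x, AddSubmonoid.subset_closure hx, 0, zero_mem _, (sub_zero x).symm⟩
    | zero => exact ⟨0, zero_mem _, 0, zero_mem _, (sub_zero 0).symm⟩
    | add x y _ _ hx hy =>
      obtain ⟨p, hp, q, hq, rfl⟩ := hx
      obtain ⟨p', hp', q', hq', rfl⟩ := hy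
      exact ⟨p + p', add_mem hp hp', q + q', add_mem hq hq', by abel⟩
    | neg x _ hx =>
      obtain ⟨p, hp, q, hq, rfl⟩ := hx
      exact ⟨q, hq, p, hp, neg_sub p q⟩

lemma sum_smul_mem_coneOf {Γ : Set (V n)} {c : Fin M → ℝ} {v : Fin M → V n}
    (hc : ∀ i, 0 ≤ c i) (hv : ∀ i, v i ∈ Γ) : ∑ i, c i • v i ∈ coneOf Γ :=
  ⟨M, c, v, hc, hv, rfl⟩

lemma subset_coneOf (Γ : Set (V n)) : Γ ⊆ coneOf Γ :=
  fun x hx => ⟨1, fun _ => 1, fun _ => x, fun _ => zero_le_one, fun _ => hx, by simp⟩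

lemma mem_coneOf_closure_range_iff (v : Fin M → V n) {x : V n} :
    x ∈ coneOf (AddSubmonoid.closure (Set.range v) : Set (V n)) ↔
      ∃ c : Fin M → ℝ, (∀ i, 0 ≤ c i) ∧ x = ∑ i, c i • v i := by
  constructor
  · rintro ⟨T, c, w, hc, hw, rfl⟩
    choose m hm using fun t => (mem_closure_range_iff v).mp (hw t)
    refine ⟨fun i => ∑ t, c t * m t i, fun i =>
      Finset.sum_nonneg fun t _ => mul_nonneg (hc t) (Nat.cast_nonneg _), ?_⟩
    simp only [hm, Finset.smul_sum, smul_smul, Finset.sum_smul]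
    exact Finset.sum_comm
  · rintro ⟨c, hc, rfl⟩
    exact sum_smul_mem_coneOf hc fun i => AddSubmonoid.subset_closure (Set.mem_range_self i)

lemma dotProduct_int_of_mem_span_int {s : Set (V n)} {w u : V n}
    (hs : ∀ x ∈ s, ∃ m : ℤ, w ⬝ᵥ x = m) (hu : u ∈ Submodule.span ℤ s) :
    ∃ m : ℤ, w ⬝ᵥ u = m := by
  induction hu using Submodule.span_induction with
  | mem x hx => exact hs x hx
  | zero => exact ⟨0, by simp⟩
  | add x y _ _ hx hy =>
    obtain ⟨p, hp⟩ := hx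
    obtain ⟨q, hq⟩ := hy
    exact ⟨p + q, by rw [dotProduct_add, hp, hq]; push_cast; ring⟩
  | smul z x _ hx =>
    obtain ⟨p, hp⟩ := hx
    exact ⟨z * p, by rw [← Int.cast_smul_eq_zsmul ℝ, dotProduct_smul, hp]; simp⟩

lemma mem_nnIntPts_iff {x : V n} : x ∈ nnIntPts n ↔ x ∈ intPts n ∧ x ∈ nnPts n := by
  refine ⟨fun h => ⟨fun j => ?_, fun j => ?_⟩, fun ⟨hint, hnn⟩ j => ?_⟩
  · obtain ⟨m, hm⟩ := h j
    exact ⟨m, by rw [hm]; rfl⟩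
  · obtain ⟨m, hm⟩ := h j
    rw [hm]; positivity
  · obtain ⟨m, hm⟩ := hint j
    obtain ⟨r, rfl⟩ := Int.eq_ofNat_of_zero_le (by exact_mod_cast hm ▸ hnn j : (0 : ℤ) ≤ m)
    exact ⟨r, by rw [hm, Int.cast_natCast]⟩

lemma mem_dualSemigroup_closure_range_iff (v : Fin M → V n) {w : V n} :
    w ∈ dualSemigroup (AddSubmonoid.closure (Set.range v) : Set (V n)) ↔
      w ∈ Submodule.span ℝ (Set.range v) ∧ ∀ i, ∃ m : ℕ, v i ⬝ᵥ w = m := by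
  have hv : ∀ i, v i ∈ AddSubmonoid.closure (Set.range v) :=
    fun i => AddSubmonoid.subset_closure (Set.mem_range_self i)
  have hnat : (∀ i, ∃ m : ℕ, v i ⬝ᵥ w = m) ↔
      Matrix.of v *ᵥ w ∈ intPts M ∧ Matrix.of v *ᵥ w ∈ nnPts M := mem_nnIntPts_iff
  simp only [dualSemigroup, dualLattice, dualCone, diffSet_closure, Submodule.span_span_of_tower,
    Set.mem_inter_iff, Set.mem_ofPred_eq, hnat]
  constructor
  · rintro ⟨⟨hspan, hint⟩, hcone⟩
    refine ⟨hspan, fun i => ?_, fun i => hcone _ (subset_coneOf _ (hv i))⟩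
    obtain ⟨m, hm⟩ := hint (v i) (Submodule.subset_span (Set.mem_range_self i))
    exact ⟨m, by rw [← hm, dotProduct_comm]; rfl⟩
  · rintro ⟨hspan, hint, hnn⟩
    refine ⟨⟨hspan, fun u hu => dotProduct_int_of_mem_span_int ?_ hu⟩, fun x hx => ?_⟩
    · rintro _ ⟨i, rfl⟩
      obtain ⟨m, hm⟩ := hint i
      exact ⟨m, by rw [dotProduct_comm, ← hm]; rfl⟩
    · obtain ⟨c, hc, rfl⟩ := (mem_coneOf_closure_range_iff v).mp hx
      simp only [sum_dotProduct, smul_dotProduct, smul_eq_mul]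
      exact Finset.sum_nonneg fun i _ => mul_nonneg (hc i) (hnn i)

end Generators

def ConicallyIndependent {n M : ℕ} (v : Fin M → V n) : Prop :=
  ∀ i, ¬ ∃ c : Fin M → ℝ, (∀ i', 0 ≤ c i') ∧ c i = 0 ∧ v i = ∑ i', c i' • v i'

namespace ConicallyIndependent

variable {n M : ℕ} {v : Fin M → V n}

lemma ne_zero (hv : ConicallyIndependent v) (i : Fin M) : v i ≠ 0 :=
  fun h => hv i ⟨0, fun _ => le_rfl, rfl, by simp [h]⟩

lemma injective (hv : ConicallyIndependent v) : Function.Injective v := by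
  intro i i' h
  by_contra hne
  exact hv i ⟨Pi.single i' 1, fun t => by rw [Pi.single_apply]; positivity, by simp [hne],
    by simp [h]⟩

lemma of_comp {m : ℕ} (f : V n →ₗ[ℝ] V m) (hv : ConicallyIndependent (f ∘ v)) :
    ConicallyIndependent v := by
  rintro i ⟨c, hc, hci, hvi⟩
  exact hv i ⟨c, hc, hci, by simp [hvi]⟩

lemma isMinGenSet (hv : ConicallyIndependent v) :
    IsMinGenSet (Set.range v) (AddSubmonoid.closure (Set.range v) : Set (V n)) := by
  refine ⟨rfl, fun B hB hgen => ?_⟩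
  obtain ⟨_, ⟨i, rfl⟩, hiB⟩ := Set.exists_of_ssubset hB
  have hvi : v i ∈ AddSubmonoid.closure B := by
    rw [← SetLike.mem_coe, hgen]
    exact AddSubmonoid.subset_closure (Set.mem_range_self i)
  suffices ∀ x ∈ AddSubmonoid.closure B,
      ∃ c : Fin M → ℝ, (∀ t, 0 ≤ c t) ∧ c i = 0 ∧ x = ∑ t, c t • v t from hv i (this _ hvi)
  intro x hx
  induction hx using AddSubmonoid.closure_induction with
  | mem x hx =>
    obtain ⟨j, rfl⟩ := hB.1 hx
    have hji : j ≠ i := by rintro rfl; exact hiB hx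
    exact ⟨Pi.single j 1, fun t => by rw [Pi.single_apply]; positivity, by simp [hji.symm], by simp⟩
  | zero => exact ⟨0, fun _ => le_rfl, rfl, by simp⟩
  | add x y _ _ hx hy =>
    obtain ⟨c, hc, hci, rfl⟩ := hx
    obtain ⟨d, hd, hdi, rfl⟩ := hy
    exact ⟨c + d, fun t => add_nonneg (hc t) (hd t), by simp [hci, hdi],
      by simp [add_smul, Finset.sum_add_distrib]⟩

end ConicallyIndependent

section Farkas

variable {𝕜 D : Type*} [Field 𝕜] [LinearOrder 𝕜] [IsStrictOrderedRing 𝕜] [Fintype D]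

theorem farkas_alternative : ∀ {k : ℕ} (a : Fin k → D → 𝕜) (x : D → 𝕜),
    (∃ c : Fin k → 𝕜, (∀ i, 0 ≤ c i) ∧ x = ∑ i, c i • a i) ∨
      ∃ w : D → 𝕜, (∀ i, 0 ≤ a i ⬝ᵥ w) ∧ x ⬝ᵥ w < 0
  | 0, a, x => by
    by_cases hx : x = 0
    · exact .inl ⟨0, fun _ => le_rfl, by simp [hx]⟩
    · refine .inr ⟨-x, fun i => i.elim0, ?_⟩
      rw [dotProduct_neg, neg_neg_iff_pos]
      exact (Finset.sum_nonneg fun t _ => mul_self_nonneg (x t)).lt_of_ne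
        (Ne.symm (mt dotProduct_self_eq_zero.mp hx))
  | k + 1, a, x => by
    rcases farkas_alternative (fun i => a i.succ) x with ⟨c, hc, hx⟩ | ⟨w, hw, hxw⟩
    · refine .inl ⟨Fin.cons 0 c, fun i => Fin.cases le_rfl hc i, ?_⟩
      simpa [Fin.sum_univ_succ] using hx
    by_cases h0 : 0 ≤ a 0 ⬝ᵥ w
    · exact .inr ⟨w, fun i => Fin.cases h0 hw i, hxw⟩
    replace h0 := not_le.mp h0
    -- Project along `a 0` onto the hyperplane `w⊥` and recurse on the remaining vectors.
    set π : (D → 𝕜) → (D → 𝕜) := fun u => u - (u ⬝ᵥ w / a 0 ⬝ᵥ w) • a 0 with hπ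
    rcases farkas_alternative (fun i => π (a i.succ)) (π x) with ⟨c, hc, hx'⟩ | ⟨w', hw', hxw'⟩
    · have hcoef : 0 ≤ x ⬝ᵥ w / a 0 ⬝ᵥ w - ∑ i, c i * (a i.succ ⬝ᵥ w / a 0 ⬝ᵥ w) := by
        have h1 : 0 < x ⬝ᵥ w / a 0 ⬝ᵥ w := div_pos_of_neg_of_neg hxw h0
        have h2 : ∑ i, c i * (a i.succ ⬝ᵥ w / a 0 ⬝ᵥ w) ≤ 0 := Finset.sum_nonpos fun i _ =>
          mul_nonpos_of_nonneg_of_nonpos (hc i) (div_nonpos_of_nonneg_of_nonpos (hw i) h0.le)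
        linarith
      refine .inl ⟨Fin.cons _ c, fun i => Fin.cases hcoef hc i, ?_⟩
      have hx_eq : x = π x + (x ⬝ᵥ w / a 0 ⬝ᵥ w) • a 0 := by simp [hπ]
      rw [Fin.sum_univ_succ, Fin.cons_zero]
      simp only [Fin.cons_succ]
      conv_lhs => rw [hx_eq, hx']
      simp only [hπ, smul_sub, Finset.sum_sub_distrib, smul_smul, sub_smul, Finset.sum_smul]
      abel
    · set w'' := w' - (a 0 ⬝ᵥ w' / a 0 ⬝ᵥ w) • w
      have key : ∀ u, u ⬝ᵥ w'' = π u ⬝ᵥ w' := fun u => by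
        simp only [w'', hπ, dotProduct_sub, sub_dotProduct, dotProduct_smul, smul_dotProduct,
          smul_eq_mul]
        ring
      refine .inr ⟨w'', fun i => Fin.cases ?_ (fun i => (key _).symm ▸ hw' i) i,
        (key x).symm ▸ hxw'⟩
      rw [key, hπ]
      simp only [div_self h0.ne, one_smul, sub_self, zero_dotProduct, le_refl]

lemma exists_nat_mul_eq_int (w : D → ℚ) :
    ∃ m : ℕ, 0 < m ∧ ∃ z : D → ℤ, ∀ t, (m : ℚ) * w t = z t := by
  refine ⟨∏ t, (w t).den, Finset.prod_pos fun t _ => (w t).pos, ?_⟩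
  choose r hr using fun t => Finset.dvd_prod_of_mem (fun t => (w t).den) (Finset.mem_univ t)
  refine ⟨fun t => (w t).num * r t, fun t => ?_⟩
  rw [show ((∏ t, (w t).den : ℕ) : ℚ) = (w t).den * r t by exact_mod_cast hr t]
  push_cast
  rw [mul_comm _ (r t : ℚ), mul_assoc, Rat.den_mul_eq_num, mul_comm]

theorem farkas_alternative_int {k : ℕ} (a : Fin k → D → ℤ) (x : D → ℤ) :
    (∃ c : Fin k → ℝ, (∀ i, 0 ≤ c i) ∧
      (Int.cast ∘ x : D → ℝ) = ∑ i, c i • (Int.cast ∘ a i : D → ℝ)) ∨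
      ∃ z : D → ℤ, (∀ i, 0 ≤ a i ⬝ᵥ z) ∧ x ⬝ᵥ z < 0 := by
  rcases farkas_alternative (𝕜 := ℚ) (fun i => Int.cast ∘ a i) (Int.cast ∘ x) with
    ⟨c, hc, hx⟩ | ⟨w, hw, hxw⟩
  · refine .inl ⟨fun i => c i, fun i => Rat.cast_nonneg.mpr (hc i), funext fun t => ?_⟩
    have := congrArg (fun y : D → ℚ => (y t : ℝ)) hx
    simpa using this
  · obtain ⟨m, hm, z, hz⟩ := exists_nat_mul_eq_int w
    replace hm : (0 : ℚ) < m := by exact_mod_cast hm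
    have hcast : ∀ y : D → ℤ, ((y ⬝ᵥ z : ℤ) : ℚ) = m * ((Int.cast ∘ y : D → ℚ) ⬝ᵥ w) :=
      fun y => by
        simp only [dotProduct, Int.cast_sum, Int.cast_mul, Finset.mul_sum, Function.comp_apply,
          ← hz]
        exact Finset.sum_congr rfl fun t _ => by ring
    refine .inr ⟨z, fun i => ?_, ?_⟩
    · have : (0 : ℚ) ≤ ((a i ⬝ᵥ z : ℤ) : ℚ) := hcast (a i) ▸ mul_nonneg hm.le (hw i)
      exact_mod_cast this
    · have : ((x ⬝ᵥ z : ℤ) : ℚ) < 0 := hcast x ▸ mul_neg_of_pos_of_neg hm hxw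
      exact_mod_cast this

end Farkas

section Lattice

variable {n : ℕ}

lemma IsDiscreteSet.discreteTopology {s : Set (V n)} (hs : IsDiscreteSet s) :
    DiscreteTopology s := by
  rw [discreteTopology_iff_isOpen_singleton]
  rintro ⟨x, hx⟩
  obtain ⟨ε, hε, h⟩ := hs x hx
  exact Metric.isOpen_singleton_iff.mpr ⟨ε, hε, fun y hy => Subtype.ext (h y y.2 hy)⟩

lemma exists_basis_span_int_eq_of_isDiscreteSet (L : Submodule ℤ (V n))
    (hL : IsDiscreteSet (L : Set (V n))) :
    ∃ (d : ℕ) (e : Module.Basis (Fin d) ℝ (Submodule.span ℝ (L : Set (V n)))),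
      Submodule.span ℤ (Set.range fun t => (e t : V n)) = L := by
  set W := Submodule.span ℝ (L : Set (V n))
  set incl := W.subtype.restrictScalars ℤ
  set L₀ : Submodule ℤ W := L.comap incl
  have hL₀ : L₀.map incl = L :=
    Submodule.map_comap_eq_self fun x hx => ⟨⟨x, Submodule.subset_span hx⟩, rfl⟩
  have : DiscreteTopology L := hL.discreteTopology
  have : DiscreteTopology L₀ :=
    DiscreteTopology.preimage_of_continuous_injective (L : Set (V n))
      (LinearMap.continuous_of_finiteDimensional W.subtype) (Submodule.injective_subtype _)
  have : IsZLattice ℝ L₀ := ⟨by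
    rw [← (Submodule.map_injective_of_injective (Submodule.injective_subtype W)).eq_iff,
      Submodule.map_span, Submodule.map_top, Submodule.range_subtype]
    exact congrArg (Submodule.span ℝ ·) (congrArg ((↑) : Submodule ℤ (V n) → Set (V n)) hL₀)⟩
  let e := (Module.Basis.ofZLatticeBasis ℝ L₀ (Module.Free.chooseBasis ℤ L₀)).reindex
    (Fintype.equivFin _)
  have hspan : Submodule.span ℤ (Set.range e) = L₀ := by
    rw [Module.Basis.range_reindex]
    exact Module.Basis.ofZLatticeBasis_span ℝ L₀ _
  refine ⟨_, e, ?_⟩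
  calc Submodule.span ℤ (Set.range fun t => (e t : V n))
      = (Submodule.span ℤ (Set.range e)).map incl := by
        rw [Submodule.map_span, ← Set.range_comp]; rfl
    _ = L := by rw [hspan, hL₀]

lemma exists_dual_pair_of_isDiscreteSet (L : Submodule ℤ (V n))
    (hL : IsDiscreteSet (L : Set (V n))) :
    ∃ (d : ℕ) (e f : Fin d → V n), Submodule.span ℤ (Set.range e) = L ∧
      (∀ t, f t ∈ Submodule.span ℝ (L : Set (V n))) ∧
      ∀ s t, e s ⬝ᵥ f t = if s = t then 1 else 0 := by
  classical
  obtain ⟨d, e, he⟩ := exists_basis_span_int_eq_of_isDiscreteSet L hL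
  let B := LinearMap.BilinForm.restrict (dotProductBilin ℝ ℝ) (Submodule.span ℝ (L : Set (V n)))
  have hB : B.Nondegenerate :=
    ⟨fun x hx => Subtype.ext (dotProduct_self_eq_zero.mp (hx x)),
      fun x hx => Subtype.ext (dotProduct_self_eq_zero.mp (hx x))⟩
  refine ⟨d, fun t => e t, fun t => B.dualBasis hB e t, he, fun t => (B.dualBasis hB e t).2,
    fun s t => ?_⟩
  rw [dotProduct_comm]
  exact LinearMap.BilinForm.apply_dualBasis_left hB e t s

end Lattice

section DualPair

variable {n d : ℕ} {e f : Fin d → V n}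

lemma eq_sum_dotProduct_smul_of_mem_span (hef : ∀ s t, e s ⬝ᵥ f t = if s = t then 1 else 0)
    {x : V n} (hx : x ∈ Submodule.span ℝ (Set.range e)) : x = ∑ t, (x ⬝ᵥ f t) • e t := by
  obtain ⟨c, rfl⟩ := (Submodule.mem_span_range_iff_exists_fun ℝ).mp hx
  simp [sum_dotProduct, smul_dotProduct, hef]

lemma mem_span_int_of_dotProduct_int (hef : ∀ s t, e s ⬝ᵥ f t = if s = t then 1 else 0)
    {x : V n} (hx : x ∈ Submodule.span ℝ (Set.range e)) (hint : ∀ t, ∃ m : ℤ, x ⬝ᵥ f t = m) :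
    x ∈ Submodule.span ℤ (Set.range e) := by
  choose m hm using hint
  rw [eq_sum_dotProduct_smul_of_mem_span hef hx]
  simp_rw [hm, Int.cast_smul_eq_zsmul]
  exact Submodule.sum_mem _ fun t _ => Submodule.smul_mem _ _ (Submodule.subset_span ⟨t, rfl⟩)

lemma dual_dotProduct_int_of_mem_span_int (hef : ∀ s t, e s ⬝ᵥ f t = if s = t then 1 else 0)
    {x : V n} (hx : x ∈ Submodule.span ℤ (Set.range e)) (t : Fin d) :
    ∃ m : ℤ, f t ⬝ᵥ x = m := by
  refine dotProduct_int_of_mem_span_int ?_ hx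
  rintro _ ⟨s, rfl⟩
  exact ⟨if s = t then 1 else 0, by rw [dotProduct_comm, hef]; split_ifs <;> simp⟩

lemma exists_int_coords_of_mem_span_int (hef : ∀ s t, e s ⬝ᵥ f t = if s = t then 1 else 0)
    {x : V n} (hx : x ∈ Submodule.span ℤ (Set.range e)) :
    ∃ X : Fin d → ℤ, (∀ t, x ⬝ᵥ f t = X t) ∧
      x = Fintype.linearCombination ℝ e (Int.cast ∘ X) := by
  choose X hX using dual_dotProduct_int_of_mem_span_int hef hx
  simp_rw [dotProduct_comm (f _)] at hX
  refine ⟨X, hX, ?_⟩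
  rw [Fintype.linearCombination_apply]
  simp_rw [Function.comp_apply, ← hX]
  exact eq_sum_dotProduct_smul_of_mem_span hef (Submodule.span_le_restrictScalars ℤ ℝ _ hx)

end DualPair

section Duality

variable {n M : ℕ}

theorem mem_of_forall_mem_dualLattice {L : Submodule ℤ (V n)} (hL : IsDiscreteSet (L : Set (V n)))
    {x : V n} (hx : x ∈ Submodule.span ℝ (L : Set (V n)))
    (h : ∀ w ∈ dualLattice (L : Set (V n)), ∃ m : ℤ, x ⬝ᵥ w = m) : x ∈ L := by
  obtain ⟨d, e, f, rfl, hf, hef⟩ := exists_dual_pair_of_isDiscreteSet L hL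
  refine mem_span_int_of_dotProduct_int hef (by rwa [Submodule.span_span_of_tower] at hx)
    fun t => h _ ⟨hf t, fun v hv => dual_dotProduct_int_of_mem_span_int hef hv t⟩

theorem mem_coneOf_of_forall_mem_dualSemigroup (a : Fin M → V n)
    (hdisc : IsDiscreteSet (Submodule.span ℤ (Set.range a) : Set (V n)))
    {x : V n} (hx : x ∈ Submodule.span ℤ (Set.range a))
    (h : ∀ w ∈ dualSemigroup (AddSubmonoid.closure (Set.range a) : Set (V n)), 0 ≤ x ⬝ᵥ w) :
    x ∈ coneOf (AddSubmonoid.closure (Set.range a) : Set (V n)) := by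
  obtain ⟨d, e, f, he, hf, hef⟩ := exists_dual_pair_of_isDiscreteSet _ hdisc
  rw [Submodule.span_span_of_tower] at hf
  rw [← he] at hx
  choose A hAf hAe using fun i => exists_int_coords_of_mem_span_int hef
    (he ▸ Submodule.subset_span ⟨i, rfl⟩ : a i ∈ Submodule.span ℤ (Set.range e))
  obtain ⟨X, hXf, hXe⟩ := exists_int_coords_of_mem_span_int hef hx
  rcases farkas_alternative_int A X with ⟨c, hc, hXA⟩ | ⟨z, hz, hXz⟩
  · refine (mem_coneOf_closure_range_iff a).mpr ⟨c, hc, ?_⟩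
    simp_rw [hXe, hXA, map_sum, map_smul, ← hAe]
  · set u := ∑ t, (z t : ℝ) • f t
    have hu : ∀ (y : V n) (Y : Fin d → ℤ), (∀ t, y ⬝ᵥ f t = Y t) → y ⬝ᵥ u = ((Y ⬝ᵥ z : ℤ) : ℝ) :=
      fun y Y hY => by
        simp only [u, dotProduct_sum, dotProduct_smul, hY, smul_eq_mul]
        push_cast [dotProduct]
        exact Finset.sum_congr rfl fun t _ => mul_comm _ _
    have hmem : u ∈ dualSemigroup (AddSubmonoid.closure (Set.range a) : Set (V n)) := by
      refine (mem_dualSemigroup_closure_range_iff a).mpr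
        ⟨Submodule.sum_mem _ fun t _ => Submodule.smul_mem _ _ (hf t), fun i => ?_⟩
      obtain ⟨r, hr⟩ := Int.eq_ofNat_of_zero_le (hz i)
      exact ⟨r, by rw [hu _ _ (hAf i), hr, Int.cast_natCast]⟩
    have := h u hmem
    rw [hu x X hXf] at this
    exact absurd hXz (not_lt.mpr (by exact_mod_cast this))

lemma dualLattice_subset_diffSet_dualSemigroup (v : Fin M → V n) {p : V n}
    (hp : p ∈ dualSemigroup (AddSubmonoid.closure (Set.range v) : Set (V n)))
    (hpos : ∀ i, 0 < v i ⬝ᵥ p) :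
    dualLattice (diffSet (AddSubmonoid.closure (Set.range v) : Set (V n))) ⊆
      diffSet (dualSemigroup (AddSubmonoid.closure (Set.range v) : Set (V n))) := by
  rintro w ⟨hw, hint⟩
  rw [diffSet_closure, Submodule.span_span_of_tower] at hw
  choose m hm using fun i =>
    hint (v i) (by rw [diffSet_closure]; exact Submodule.subset_span ⟨i, rfl⟩)
  obtain ⟨hpspan, hpnat⟩ := (mem_dualSemigroup_closure_range_iff v).mp hp
  choose k hk using hpnat
  have hk1 : ∀ i, (1 : ℤ) ≤ k i := fun i => by
    have := hpos i
    rw [hk i] at this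
    exact_mod_cast this
  -- Shifting by a large multiple of `p` makes every pairing with a generator nonnegative.
  set N : ℕ := ∑ i, (m i).natAbs
  have hN : ∀ i, 0 ≤ m i + N * k i := fun i => by
    have : |m i| ≤ N := by
      rw [Int.abs_eq_natAbs]
      exact_mod_cast Finset.single_le_sum (f := fun i => (m i).natAbs)
        (fun _ _ => Nat.zero_le _) (Finset.mem_univ i)
    nlinarith [neg_abs_le (m i), hk1 i]
  refine ⟨w + (N : ℝ) • p, ?_, (N : ℝ) • p, ?_, (add_sub_cancel_right _ _).symm⟩
  · refine (mem_dualSemigroup_closure_range_iff v).mpr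
      ⟨add_mem hw (Submodule.smul_mem _ _ hpspan), fun i => ?_⟩
    obtain ⟨r, hr⟩ := Int.eq_ofNat_of_zero_le (hN i)
    refine ⟨r, ?_⟩
    have := congrArg (Int.cast : ℤ → ℝ) hr
    push_cast at this
    rw [dotProduct_add, dotProduct_smul, dotProduct_comm, hm i, hk i, smul_eq_mul, ← this]
  · refine (mem_dualSemigroup_closure_range_iff v).mpr
      ⟨Submodule.smul_mem _ _ hpspan, fun i => ⟨N * k i, ?_⟩⟩
    rw [dotProduct_smul, hk i, smul_eq_mul, Nat.cast_mul]

theorem mem_diffSet_inter_coneOf_of_forall_dotProduct_nat (a : Fin M → V n)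
    (hdisc : IsDiscreteSet (Submodule.span ℤ (Set.range a) : Set (V n))) {p : V n}
    (hp : p ∈ dualSemigroup (AddSubmonoid.closure (Set.range a) : Set (V n)))
    (hpos : ∀ i, 0 < a i ⬝ᵥ p) {x : V n} (hx : x ∈ Submodule.span ℝ (Set.range a))
    (hnat : ∀ w ∈ dualSemigroup (AddSubmonoid.closure (Set.range a) : Set (V n)),
      ∃ m : ℕ, x ⬝ᵥ w = m) :
    x ∈ diffSet (AddSubmonoid.closure (Set.range a) : Set (V n)) ∩
      coneOf (AddSubmonoid.closure (Set.range a) : Set (V n)) := by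
  have hxΛ : x ∈ Submodule.span ℤ (Set.range a) := by
    refine mem_of_forall_mem_dualLattice hdisc (by rwa [Submodule.span_span_of_tower]) ?_
    intro w hw
    rw [← diffSet_closure] at hw
    obtain ⟨q, hq, q', hq', rfl⟩ := dualLattice_subset_diffSet_dualSemigroup a hp hpos hw
    obtain ⟨m, hm⟩ := hnat q hq
    obtain ⟨m', hm'⟩ := hnat q' hq'
    exact ⟨m - m', by rw [dotProduct_sub, hm, hm']; push_cast; ring⟩
  refine ⟨by rwa [diffSet_closure], mem_coneOf_of_forall_mem_dualSemigroup a hdisc hxΛ ?_⟩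
  intro w hw
  obtain ⟨m, hm⟩ := hnat w hw
  rw [hm]
  positivity

end Duality

section Points

variable {n M : ℕ}

lemma IsDiscreteSet.of_subset_intPts {Λ : Set (V n)} (h : Λ ⊆ intPts n) : IsDiscreteSet Λ := by
  refine fun x hx => ⟨1, one_pos, fun y hy hxy => funext fun j => ?_⟩
  obtain ⟨p, hp⟩ := h hx j
  obtain ⟨q, hq⟩ := h hy j
  have hlt : |((q - p : ℤ) : ℝ)| < 1 := by
    rw [Int.cast_sub, ← hp, ← hq, ← Real.dist_eq]
    exact (dist_le_pi_dist y x j).trans_lt hxy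
  have : |q - p| < 1 := by exact_mod_cast hlt
  rw [hp, hq, Int.cast_inj]
  rw [abs_lt] at this
  omega

lemma IsPositive.of_subset_nnPts {Γ : Set (V n)} (h : Γ ⊆ nnPts n) : IsPositive Γ :=
  fun x hx hnx => funext fun j => le_antisymm (by simpa using h hnx j) (h hx j)

lemma span_int_subset_intPts {s : Set (V n)} (hs : s ⊆ intPts n) :
    (Submodule.span ℤ s : Set (V n)) ⊆ intPts n := by
  classical
  intro x hx j
  obtain ⟨m, hm⟩ := dotProduct_int_of_mem_span_int (w := Pi.single j 1) (fun y hy => by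
    obtain ⟨m, hm⟩ := hs hy j
    exact ⟨m, by rw [single_one_dotProduct, hm]⟩) hx
  exact ⟨m, by rwa [single_one_dotProduct] at hm⟩

lemma coneOf_closure_range_subset_nnPts {v : Fin M → V n} (hv : ∀ i, v i ∈ nnPts n) :
    coneOf (AddSubmonoid.closure (Set.range v) : Set (V n)) ⊆ nnPts n := by
  intro x hx j
  obtain ⟨c, hc, rfl⟩ := (mem_coneOf_closure_range_iff v).mp hx
  simp only [Finset.sum_apply, Pi.smul_apply, smul_eq_mul]
  exact Finset.sum_nonneg fun i _ => mul_nonneg (hc i) (hv i j)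

lemma closure_subset_diffSet_inter_coneOf (s : Set (V n)) :
    (AddSubmonoid.closure s : Set (V n)) ⊆
      diffSet (AddSubmonoid.closure s : Set (V n)) ∩ coneOf (AddSubmonoid.closure s : Set (V n)) :=
  fun x hx => ⟨⟨x, hx, 0, zero_mem _, (sub_zero x).symm⟩, subset_coneOf _ hx⟩

lemma diffSet_inter_coneOf_closure_range_subset {v : Fin M → V n} (hint : ∀ i, v i ∈ intPts n)
    (hnn : ∀ i, v i ∈ nnPts n) :
    diffSet (AddSubmonoid.closure (Set.range v) : Set (V n)) ∩
        coneOf (AddSubmonoid.closure (Set.range v) : Set (V n)) ⊆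
      nnIntPts n ∩ Submodule.span ℝ (Set.range v) := by
  rintro x ⟨hxΛ, hxK⟩
  rw [diffSet_closure] at hxΛ
  exact ⟨mem_nnIntPts_iff.mpr ⟨span_int_subset_intPts (Set.range_subset_iff.mpr hint) hxΛ,
    coneOf_closure_range_subset_nnPts hnn hxK⟩, Submodule.span_le_restrictScalars ℤ ℝ _ hxΛ⟩

lemma map_mem_diffSet_inter_coneOf {m : ℕ} (f : V n →ₗ[ℝ] V m) {v : Fin M → V n} {x : V n}
    (hx : x ∈ diffSet (AddSubmonoid.closure (Set.range v) : Set (V n)) ∩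
        coneOf (AddSubmonoid.closure (Set.range v) : Set (V n))) :
    f x ∈ diffSet (AddSubmonoid.closure (Set.range (f ∘ v)) : Set (V m)) ∩
        coneOf (AddSubmonoid.closure (Set.range (f ∘ v)) : Set (V m)) := by
  obtain ⟨hxΛ, hxK⟩ := hx
  rw [diffSet_closure] at hxΛ ⊢
  obtain ⟨c, hc, rfl⟩ := (mem_coneOf_closure_range_iff v).mp hxK
  refine ⟨?_, (mem_coneOf_closure_range_iff _).mpr ⟨c, hc, by simp⟩⟩
  rw [Set.range_comp]
  exact Submodule.apply_mem_span_image_of_mem_span (f.restrictScalars ℤ) hxΛ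

end Points

section RowSpace

variable {k l : ℕ} (v : Fin k → V l)

lemma eq_zero_of_mem_span_of_mulVec_eq_zero {w : V l} (hw : w ∈ Submodule.span ℝ (Set.range v))
    (h : Matrix.of v *ᵥ w = 0) : w = 0 := by
  obtain ⟨c, hc⟩ := (Submodule.mem_span_range_iff_exists_fun ℝ).mp hw
  refine dotProduct_self_eq_zero.mp ?_
  calc w ⬝ᵥ w = (∑ i, c i • v i) ⬝ᵥ w := by rw [hc]
    _ = ∑ i, c i * (Matrix.of v *ᵥ w) i := by simp only [sum_dotProduct, smul_dotProduct]; rfl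
    _ = 0 := by simp [h]

lemma exists_mem_span_mulVec_eq {y : V k} (hy : y ∈ LinearMap.range (Matrix.of v).mulVecLin) :
    ∃ w ∈ Submodule.span ℝ (Set.range v), Matrix.of v *ᵥ w = y := by
  set A := Matrix.of v
  have hrange : LinearMap.range (A * Aᵀ).mulVecLin = LinearMap.range A.mulVecLin :=
    Submodule.eq_of_le_of_finrank_eq
      (by rw [Matrix.mulVecLin_mul]; exact LinearMap.range_comp_le_range _ _)
      (Matrix.rank_self_mul_transpose A)
  rw [← hrange] at hy
  obtain ⟨u, rfl⟩ := hy
  refine ⟨Aᵀ *ᵥ u, ?_, by rw [Matrix.mulVecLin_apply, Matrix.mulVec_mulVec]⟩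
  have : Aᵀ *ᵥ u ∈ LinearMap.range Aᵀ.mulVecLin := ⟨u, rfl⟩
  rwa [Matrix.range_mulVecLin] at this

end RowSpace

section SlackMatrix

variable {k l : ℕ} (S : Matrix (Fin k) (Fin l) ℤ)

lemma GammaRow_eq_closure : GammaRow S = AddSubmonoid.closure (Set.range (rowVec S)) :=
  Set.ext fun _ => (mem_closure_range_iff _).symm

lemma GammaCol_eq_closure : GammaCol S = AddSubmonoid.closure (Set.range (colVec S)) :=
  Set.ext fun _ => (mem_closure_range_iff _).symm

lemma ColSpace_eq_range : ColSpace S = LinearMap.range (Matrix.of (rowVec S)).mulVecLin := by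
  rw [Matrix.range_mulVecLin]
  rfl

lemma diffSet_inter_coneOf_GammaRow_subset (hnn : ∀ i j, 0 ≤ S i j) :
    diffSet (GammaRow S) ∩ coneOf (GammaRow S) ⊆ nnIntPts l ∩ RowSpace S := by
  rw [GammaRow_eq_closure]
  exact diffSet_inter_coneOf_closure_range_subset (fun i j => ⟨S i j, rfl⟩)
    fun i j => Int.cast_nonneg (hnn i j)

lemma GammaCol_subset (hnn : ∀ i j, 0 ≤ S i j) : GammaCol S ⊆ nnIntPts k ∩ ColSpace S := by
  rw [GammaCol_eq_closure]
  exact (closure_subset_diffSet_inter_coneOf _).trans <| diffSet_inter_coneOf_closure_range_subset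
    (fun j i => ⟨S i j, rfl⟩) fun j i => Int.cast_nonneg (hnn i j)

end SlackMatrix

section Forward

variable {n k l : ℕ} {S : Matrix (Fin k) (Fin l) ℤ} {a : Fin k → V n} {b : Fin l → V n}

theorem GammaCol_eq_of_slack (hnn : ∀ i j, 0 ≤ S i j) (hab : ∀ i j, (S i j : ℝ) = a i ⬝ᵥ b j)
    (hb : (AddSubmonoid.closure (Set.range b) : Set (V n)) =
      dualSemigroup (AddSubmonoid.closure (Set.range a) : Set (V n))) :
    GammaCol S = nnIntPts k ∩ ColSpace S := by
  refine (GammaCol_subset S hnn).antisymm ?_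
  rintro y ⟨hy, hyspan⟩
  set ψ := (Matrix.of a).mulVecLin
  have hcol : colVec S = ψ ∘ b := funext fun j => funext fun i => hab i j
  rw [ColSpace, hcol, Set.range_comp, Submodule.span_image] at hyspan
  obtain ⟨w, hw, rfl⟩ := hyspan
  have hba : Submodule.span ℝ (Set.range b) ≤ Submodule.span ℝ (Set.range a) := by
    rw [Submodule.span_le, Set.range_subset_iff]
    intro j
    have : b j ∈ dualSemigroup (AddSubmonoid.closure (Set.range a) : Set (V n)) :=
      hb ▸ AddSubmonoid.subset_closure (Set.mem_range_self j)
    exact ((mem_dualSemigroup_closure_range_iff a).mp this).1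
  have hwΓ : w ∈ (AddSubmonoid.closure (Set.range b) : Set (V n)) :=
    hb ▸ (mem_dualSemigroup_closure_range_iff a).mpr ⟨hba hw, hy⟩
  obtain ⟨m, rfl⟩ := (mem_closure_range_iff b).mp hwΓ
  exact ⟨m, by simp [hcol]⟩

lemma dotProduct_sum_pos_of_slack (hnn : ∀ i j, 0 ≤ S i j)
    (hrows : ConicallyIndependent (rowVec S)) (hab : ∀ i j, (S i j : ℝ) = a i ⬝ᵥ b j) (i : Fin k) :
    0 < a i ⬝ᵥ ∑ j, b j := by
  obtain ⟨j, hj⟩ := Function.ne_iff.mp (hrows.ne_zero i)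
  rw [dotProduct_sum, ← funext (hab i)]
  refine Finset.sum_pos' (fun j _ => Int.cast_nonneg (hnn i j)) ⟨j, Finset.mem_univ j, ?_⟩
  exact (Int.cast_nonneg (hnn i j)).lt_of_ne (Ne.symm hj)

theorem diffSet_inter_coneOf_GammaRow_eq_of_slack (hnn : ∀ i j, 0 ≤ S i j)
    (hrows : ConicallyIndependent (rowVec S))
    (hdisc : IsDiscreteSet (Submodule.span ℤ (Set.range a) : Set (V n)))
    (hab : ∀ i j, (S i j : ℝ) = a i ⬝ᵥ b j)
    (hb : (AddSubmonoid.closure (Set.range b) : Set (V n)) =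
      dualSemigroup (AddSubmonoid.closure (Set.range a) : Set (V n))) :
    diffSet (GammaRow S) ∩ coneOf (GammaRow S) = nnIntPts l ∩ RowSpace S := by
  refine (diffSet_inter_coneOf_GammaRow_subset S hnn).antisymm ?_
  rintro y ⟨hy, hyspan⟩
  set φ := (Matrix.of b).mulVecLin
  have hrow : rowVec S = φ ∘ a :=
    funext fun i => funext fun j => (hab i j).trans (dotProduct_comm _ _)
  rw [RowSpace, hrow, Set.range_comp, Submodule.span_image] at hyspan
  obtain ⟨x, hx, rfl⟩ := hyspan
  have hnat : ∀ p ∈ dualSemigroup (AddSubmonoid.closure (Set.range a) : Set (V n)),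
      ∃ m : ℕ, x ⬝ᵥ p = m := by
    rw [← hb]
    intro p hp
    obtain ⟨c, rfl⟩ := (mem_closure_range_iff b).mp hp
    choose m hm using hy
    refine ⟨∑ j, c j * m j, ?_⟩
    rw [dotProduct_sum]
    push_cast
    refine Finset.sum_congr rfl fun j _ => ?_
    rw [dotProduct_smul, dotProduct_comm, smul_eq_mul, ← hm j]
    rfl
  have hsum : ∑ j, b j ∈ dualSemigroup (AddSubmonoid.closure (Set.range a) : Set (V n)) :=
    hb ▸ sum_mem fun j _ => AddSubmonoid.subset_closure (Set.mem_range_self j)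
  rw [GammaRow_eq_closure, hrow]
  exact map_mem_diffSet_inter_coneOf φ <| mem_diffSet_inter_coneOf_of_forall_dotProduct_nat a
    hdisc hsum (dotProduct_sum_pos_of_slack hnn hrows hab) hx hnat

end Forward

section Backward

variable {k l : ℕ} (S : Matrix (Fin k) (Fin l) ℤ)

lemma isAffineSemigroup_GammaRow : IsAffineSemigroup (GammaRow S) := by
  classical
  rw [GammaRow_eq_closure]
  refine ⟨⟨Finset.univ.image (rowVec S), by simp⟩, IsDiscreteSet.of_subset_intPts ?_⟩
  rw [diffSet_closure]
  exact span_int_subset_intPts (Set.range_subset_iff.mpr fun i j => ⟨S i j, rfl⟩)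

lemma isPositive_GammaRow (hnn : ∀ i j, 0 ≤ S i j) : IsPositive (GammaRow S) := by
  refine IsPositive.of_subset_nnPts ?_
  rw [GammaRow_eq_closure]
  exact (subset_coneOf _).trans
    (coneOf_closure_range_subset_nnPts fun i j => Int.cast_nonneg (hnn i j))

lemma dualSemigroup_GammaRow_eq_closure (hcol : GammaCol S = nnIntPts k ∩ ColSpace S)
    {b : Fin l → V l} (hbspan : ∀ j, b j ∈ RowSpace S)
    (hb : ∀ j, Matrix.of (rowVec S) *ᵥ b j = colVec S j) :
    dualSemigroup (GammaRow S) = AddSubmonoid.closure (Set.range b) := by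
  ext w
  rw [GammaRow_eq_closure, mem_dualSemigroup_closure_range_iff, SetLike.mem_coe,
    mem_closure_range_iff]
  have hsum : ∀ m : Fin l → ℕ,
      Matrix.of (rowVec S) *ᵥ ∑ j, (m j : ℝ) • b j = ∑ j, (m j : ℝ) • colVec S j := fun m => by
    simp [Matrix.mulVec_sum, Matrix.mulVec_smul, hb]
  have hbspan' : ∀ m : Fin l → ℕ, ∑ j, (m j : ℝ) • b j ∈ Submodule.span ℝ (Set.range (rowVec S)) :=
    fun m => Submodule.sum_mem _ fun j _ => Submodule.smul_mem _ _ (hbspan j)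
  constructor
  · rintro ⟨hw, hwnat⟩
    have : Matrix.of (rowVec S) *ᵥ w ∈ GammaCol S := hcol ▸ ⟨hwnat, by
      rw [ColSpace_eq_range]; exact ⟨w, rfl⟩⟩
    obtain ⟨m, hm⟩ := this
    refine ⟨m, sub_eq_zero.mp (eq_zero_of_mem_span_of_mulVec_eq_zero _ (sub_mem hw (hbspan' m)) ?_)⟩
    rw [Matrix.mulVec_sub, hsum, hm, sub_self]
  · rintro ⟨m, rfl⟩
    have : Matrix.of (rowVec S) *ᵥ ∑ j, (m j : ℝ) • b j ∈ GammaCol S := ⟨m, hsum m⟩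
    rw [hcol] at this
    exact ⟨hbspan' m, this.1⟩

lemma isSlackMatrix_GammaRow (hrows : ConicallyIndependent (rowVec S))
    (hcols : ConicallyIndependent (colVec S)) (hcol : GammaCol S = nnIntPts k ∩ ColSpace S) :
    IsSlackMatrix (GammaRow S) S := by
  choose b hbspan hb using fun j => exists_mem_span_mulVec_eq (rowVec S) (y := colVec S j)
    (by rw [Matrix.range_mulVecLin]; exact Submodule.subset_span ⟨j, rfl⟩)
  have hbind : ConicallyIndependent b :=
    ConicallyIndependent.of_comp (Matrix.of (rowVec S)).mulVecLin
      (by convert hcols using 1; exact funext fun j => hb j)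
  refine ⟨rowVec S, b, hrows.injective, hbind.injective, ?_, ?_,
    fun i j => (congrFun (hb j) i).symm⟩
  · rw [GammaRow_eq_closure]
    exact hrows.isMinGenSet
  · rw [dualSemigroup_GammaRow_eq_closure S hcol hbspan hb]
    exact hbind.isMinGenSet

end Backward

/-- If no row of `S` is a nonnegative real combination of the other rows
and no column is a nonnegative real combination of the other columns, then `S` is the
slack matrix of a positive affine semigroup iff the normalization of `Γ_S^row` equals
`ℤ₊^l ∩ Row(S)` and `Γ_S^col = ℤ₊^k ∩ Col(S)`. -/
theorem slack_matrix_characterization_irredundant {k l : ℕ} (S : Matrix (Fin k) (Fin l) ℤ)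
    (hnn : ∀ i j, 0 ≤ S i j)
    (hrows : ∀ i : Fin k, ¬ ∃ c : Fin k → ℝ, (∀ i', 0 ≤ c i') ∧ c i = 0 ∧
      rowVec S i = ∑ i', c i' • rowVec S i')
    (hcols : ∀ j : Fin l, ¬ ∃ c : Fin l → ℝ, (∀ j', 0 ≤ c j') ∧ c j = 0 ∧
      colVec S j = ∑ j', c j' • colVec S j') :
    (∃ (n : ℕ) (Γ : Set (V n)), IsAffineSemigroup Γ ∧ IsPositive Γ ∧ IsSlackMatrix Γ S) ↔
      (diffSet (GammaRow S) ∩ coneOf (GammaRow S) = nnIntPts l ∩ RowSpace S ∧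
       GammaCol S = nnIntPts k ∩ ColSpace S) := by
  constructor
  · rintro ⟨n, Γ, ⟨-, hdisc⟩, -, a, b, -, -, ⟨ha, -⟩, ⟨hb, -⟩, hab⟩
    subst ha
    rw [diffSet_closure] at hdisc
    exact ⟨diffSet_inter_coneOf_GammaRow_eq_of_slack hnn hrows hdisc hab hb,
      GammaCol_eq_of_slack hnn hab hb⟩
  · rintro ⟨-, hcol⟩
    exact ⟨l, GammaRow S, isAffineSemigroup_GammaRow S, isPositive_GammaRow S hnn,
      isSlackMatrix_GammaRow S hrows hcols hcol⟩

end
end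

section
/- Let Γ be a positive affine semigroup and let ι : Γ → Γ̃ be a lift of Γ. Then ι is injective. -/
open Matrix BigOperators

noncomputable section

/-!
If `ι x = ι y` for `x y ∈ Γ`, then `x - y` pairs to zero with all of `Γ*`, because `ι*` maps
`Γ̃*` onto `Γ*`; so it suffices that `Γ*` separates the points of `Λ_Γ`.

Positivity and discreteness forbid a nonnegative real relation `∑ tₛ s = 0` among the nonzero
generators: the integer points `∑ ⌊k tₛ⌋ s` of `Γ` stay bounded, hence two of them coincide, and
their difference is a nontrivial relation with coefficients in `ℕ`. So some functional is
positive on the nonzero generators, and rounding a large multiple of it in a basis of the dual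
lattice gives `v ∈ Γ*` with `⟨s, v⟩ ≥ 1` on them. For every `ξ` of the dual lattice, `k v + ξ`
lies in `Γ*` for all large `k`; hence anything orthogonal to `Γ*` is orthogonal to the dual
lattice, which separates the points of `span Λ_Γ`.
-/

open Submodule

section

variable {ι : Type*} [Fintype ι]

theorem exists_dotProduct_pos_of_zero_notMem_convexHull
    {R : Finset (ι → ℝ)} (h : (0 : ι → ℝ) ∉ convexHull ℝ (R : Set (ι → ℝ))) :
    ∃ a : ι → ℝ, ∀ r ∈ R, 0 < a ⬝ᵥ r := by
  classical
  obtain ⟨f, u, hf0, hfR⟩ := geometric_hahn_banach_point_closed (convex_convexHull ℝ _)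
    (R.finite_toSet.isCompact_convexHull ℝ).isClosed h
  set a : ι → ℝ := fun i => f fun j => if i = j then 1 else 0
  refine ⟨a, fun r hr => ?_⟩
  have hfr : f r = a ⬝ᵥ r := by
    simpa [dotProduct, mul_comm] using LinearMap.pi_apply_eq_sum_univ (f : (ι → ℝ) →ₗ[ℝ] ℝ) r
  calc 0 = f 0 := (map_zero f).symm
    _ < u := hf0
    _ < f r := hfR r (subset_convexHull ℝ _ hr)
    _ = a ⬝ᵥ r := hfr

theorem exists_int_dotProduct_ge_one {R : Finset (ι → ℝ)} {a : ι → ℝ}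
    (ha : ∀ r ∈ R, 0 < a ⬝ᵥ r) :
    ∃ m : ι → ℤ, ∀ r ∈ R, 1 ≤ (fun i => (m i : ℝ)) ⬝ᵥ r := by
  -- `D ⟨a, r⟩` beats the rounding error `∑ |rᵢ|` of `⌊D a⌋` by `1`, for every `r ∈ R`.
  set D := ∑ r ∈ R, (∑ i, |r i| + 1) / (a ⬝ᵥ r)
  refine ⟨fun i => ⌊D * a i⌋, fun r hr => ?_⟩
  have hD : ∑ i, |r i| + 1 ≤ D * (a ⬝ᵥ r) := by
    rw [← div_le_iff₀ (ha r hr)]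
    exact Finset.single_le_sum (f := fun r => (∑ i, |r i| + 1) / (a ⬝ᵥ r))
      (fun r hr => div_nonneg (by positivity) (ha r hr).le) hr
  have hterm : ∀ i, -|r i| ≤ ((⌊D * a i⌋ : ℝ) - D * a i) * r i := by
    intro i
    have hfloor : |(⌊D * a i⌋ : ℝ) - D * a i| ≤ 1 := by
      rw [abs_le]
      constructor <;> linarith [Int.floor_le (D * a i), Int.sub_one_lt_floor (D * a i)]
    refine (abs_le.mp ?_).1
    rw [abs_mul]
    exact mul_le_of_le_one_left (abs_nonneg _) hfloor
  have hsum : -∑ i, |r i| ≤ (fun i => (⌊D * a i⌋ : ℝ)) ⬝ᵥ r - D * (a ⬝ᵥ r) := by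
    simp only [dotProduct, Finset.mul_sum, ← Finset.sum_sub_distrib, ← Finset.sum_neg_distrib]
    exact Finset.sum_le_sum fun i _ => by linarith [hterm i]
  linarith

theorem Submodule.exists_dotProduct_eq_apply (E : Submodule ℝ (ι → ℝ))
    (f : Module.Dual ℝ E) : ∃ z : E, ∀ x : E, (x : ι → ℝ) ⬝ᵥ z = f x := by
  let T : E →ₗ[ℝ] Module.Dual ℝ E :=
    ((dotProductBilin ℝ ℝ).compl₁₂ E.subtype E.subtype).flip
  have hT : Function.Injective T := by
    refine (injective_iff_map_eq_zero T).mpr fun z hz => Subtype.ext ?_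
    exact dotProduct_self_eq_zero.mp (LinearMap.congr_fun hz z)
  obtain ⟨z, hz⟩ := ((LinearMap.injective_iff_surjective_of_finrank_eq_finrank
    (Subspace.dual_finrank_eq).symm).mp hT) f
  exact ⟨z, fun x => LinearMap.congr_fun hz x⟩

end

theorem zero_notMem_convexHull_image {E F : Type*} [AddCommGroup E] [Module ℝ E]
    [AddCommGroup F] [Module ℝ F] (f : E →ₗ[ℝ] F) {P : Submodule ℝ E} {s : Set E}
    (hsP : s ⊆ P) (hf : ∀ x ∈ P, f x = 0 → x = 0) (h : (0 : E) ∉ convexHull ℝ s) :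
    (0 : F) ∉ convexHull ℝ (f '' s) := by
  rw [← f.image_convexHull]
  rintro ⟨x, hx, hfx⟩
  exact h (hf x (convexHull_min hsP P.convex hx) hfx ▸ hx)

theorem norm_sum_floor_smul_le {E : Type*} [SeminormedAddCommGroup E] [NormedSpace ℝ E]
    {s : Finset E} {t : E → ℝ} (ht : ∀ x ∈ s, 0 ≤ t x) (hsum : ∑ x ∈ s, t x • x = 0)
    {r : ℝ} (hr : 0 ≤ r) : ‖∑ x ∈ s, ⌊r * t x⌋₊ • x‖ ≤ ∑ x ∈ s, ‖x‖ := by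
  have hshift : ∑ x ∈ s, ⌊r * t x⌋₊ • x = ∑ x ∈ s, ((⌊r * t x⌋₊ : ℝ) - r * t x) • x := by
    simp only [sub_smul, Finset.sum_sub_distrib, mul_smul, ← Finset.smul_sum, hsum, smul_zero,
      sub_zero, Nat.cast_smul_eq_nsmul]
  rw [hshift]
  refine (norm_sum_le _ _).trans (Finset.sum_le_sum fun x hx => ?_)
  have hrt : 0 ≤ r * t x := mul_nonneg hr (ht x hx)
  have hfloor : |(⌊r * t x⌋₊ : ℝ) - r * t x| ≤ 1 := by
    rw [abs_le]
    constructor <;> linarith [Nat.floor_le hrt, Nat.lt_floor_add_one (r * t x)]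
  rw [norm_smul, Real.norm_eq_abs]
  exact mul_le_of_le_one_left (norm_nonneg x) hfloor

theorem AddSubgroup.finite_closedBall_inter {E : Type*} [NormedAddCommGroup E] [ProperSpace E]
    (Λ : AddSubgroup E) [DiscreteTopology Λ] (R : ℝ) :
    (Metric.closedBall (0 : E) R ∩ Λ).Finite :=
  Metric.finite_isBounded_inter_isClosed DiscreteTopology.isDiscrete Metric.isBounded_closedBall
    AddSubgroup.isClosed_of_discrete

section

variable {n : ℕ}

theorem AddSubgroup.discreteTopology_of_isDiscreteSet {Λ : AddSubgroup (V n)}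
    (h : IsDiscreteSet (Λ : Set (V n))) : DiscreteTopology Λ := by
  obtain ⟨ε, hε, hball⟩ := h 0 Λ.zero_mem
  refine discreteTopology_of_isOpen_singleton_zero ?_
  convert (Metric.isOpen_ball (x := (0 : V n)) (ε := ε)).preimage continuous_subtype_val
  ext ⟨x, hx⟩
  simp only [Set.mem_singleton_iff, Set.mem_preimage, Metric.mem_ball]
  refine ⟨fun hx0 => ?_, fun hxε => Subtype.ext (hball x hx hxε)⟩
  obtain rfl : x = 0 := congrArg Subtype.val hx0
  simpa using hε

theorem AddSubgroup.exists_dualLattice_family_separating (Λ : AddSubgroup (V n))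
    [DiscreteTopology Λ] :
    ∃ (ι : Type) (_ : Fintype ι) (z : ι → V n), (∀ i, z i ∈ dualLattice (Λ : Set (V n))) ∧
      ∀ x ∈ span ℝ (Λ : Set (V n)), (∀ i, x ⬝ᵥ z i = 0) → x = 0 := by
  set E := span ℝ (Λ : Set (V n))
  let L : Submodule ℤ E := Λ.toIntSubmodule.comap (E.subtype.restrictScalars ℤ)
  have : DiscreteTopology L :=
    DiscreteTopology.preimage_of_continuous_injective (Λ : Set (V n))
      continuous_subtype_val Subtype.val_injective
  have : IsZLattice ℝ L := ⟨by
    rw [← (map_injective_of_injective E.injective_subtype).eq_iff, map_span, Submodule.map_top,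
      Submodule.range_subtype]
    congr 1
    ext x
    exact ⟨fun ⟨y, hy, hyx⟩ => hyx ▸ hy, fun hx => ⟨⟨x, subset_span hx⟩, hx, rfl⟩⟩⟩
  let b := (Module.Free.chooseBasis ℤ L).ofZLatticeBasis ℝ L
  choose z hz using fun i => E.exists_dotProduct_eq_apply (b.coord i)
  refine ⟨_, inferInstance, fun i => z i, fun i => ⟨(z i).2, fun v hv => ?_⟩, fun x hx h => ?_⟩
  · refine ⟨(Module.Free.chooseBasis ℤ L).repr ⟨⟨v, subset_span hv⟩, hv⟩ i, ?_⟩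
    exact (dotProduct_comm _ _).trans <| (hz i ⟨v, subset_span hv⟩).trans <|
      Module.Basis.ofZLatticeBasis_repr_apply ℝ L _ ⟨⟨v, subset_span hv⟩, hv⟩ i
  · have := b.forall_coord_eq_zero_iff.mp fun i => (hz i ⟨x, hx⟩).symm.trans (h i)
    exact congrArg Subtype.val this

def dualLatticeAddSubgroup (Λ : Set (V n)) : AddSubgroup (V n) where
  carrier := dualLattice Λ
  zero_mem' := ⟨zero_mem _, fun _ _ => ⟨0, by simp⟩⟩
  add_mem' := by
    rintro a b ⟨ha, ha'⟩ ⟨hb, hb'⟩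
    refine ⟨add_mem ha hb, fun v hv => ?_⟩
    obtain ⟨k, hk⟩ := ha' v hv
    obtain ⟨l, hl⟩ := hb' v hv
    exact ⟨k + l, by rw [add_dotProduct, hk, hl]; push_cast; rfl⟩
  neg_mem' := by
    rintro a ⟨ha, ha'⟩
    refine ⟨neg_mem ha, fun v hv => ?_⟩
    obtain ⟨k, hk⟩ := ha' v hv
    exact ⟨-k, by rw [neg_dotProduct, hk]; push_cast; rfl⟩

def AddSubmonoid.diffSubgroup (M : AddSubmonoid (V n)) : AddSubgroup (V n) where
  carrier := diffSet M
  zero_mem' := ⟨0, M.zero_mem, 0, M.zero_mem, (sub_zero 0).symm⟩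
  add_mem' := by
    rintro _ _ ⟨a, ha, b, hb, rfl⟩ ⟨c, hc, d, hd, rfl⟩
    exact ⟨a + c, M.add_mem ha hc, b + d, M.add_mem hb hd, by abel⟩
  neg_mem' := by
    rintro _ ⟨a, ha, b, hb, rfl⟩
    exact ⟨b, hb, a, ha, neg_sub a b⟩

theorem AddSubmonoid.mem_diffSubgroup_of_mem {M : AddSubmonoid (V n)} {x : V n} (hx : x ∈ M) :
    x ∈ M.diffSubgroup :=
  ⟨x, hx, 0, M.zero_mem, (sub_zero x).symm⟩

theorem mem_dualCone_coneOf_closure {S : Set (V n)} {z : V n} (h : ∀ s ∈ S, 0 ≤ s ⬝ᵥ z) :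
    z ∈ dualCone (coneOf (AddSubmonoid.closure S : Set (V n))) := by
  rintro _ ⟨k, c, v, hc, hv, rfl⟩
  rw [sum_dotProduct]
  refine Finset.sum_nonneg fun i _ => ?_
  rw [smul_dotProduct, smul_eq_mul]
  refine mul_nonneg (hc i) ?_
  exact AddSubmonoid.closure_induction (motive := fun x _ => 0 ≤ x ⬝ᵥ z) h (by simp)
    (fun x y _ _ hx hy => by rw [add_dotProduct]; exact add_nonneg hx hy) (hv i)

theorem IsPositive.eq_zero_of_sum_eq_zero {M : AddSubmonoid (V n)}
    (hpos : IsPositive (M : Set (V n))) {α : Type*} {s : Finset α} {f : α → V n}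
    (hf : ∀ i ∈ s, f i ∈ M) (hsum : ∑ i ∈ s, f i = 0) {i : α} (hi : i ∈ s) : f i = 0 := by
  classical
  refine hpos _ (hf i hi) ?_
  rw [neg_eq_of_add_eq_zero_right ((Finset.add_sum_erase s f hi).trans hsum)]
  exact sum_mem fun j hj => hf j (Finset.mem_of_mem_erase hj)

theorem IsPositive.eq_zero_of_sum_floor_smul_eq {M : AddSubmonoid (V n)}
    (hpos : IsPositive (M : Set (V n))) {s : Finset (V n)} (hs : ∀ x ∈ s, x ∈ M)
    {t : V n → ℝ} (ht : ∀ x ∈ s, 0 ≤ t x) {r r' : ℝ} (hr : 0 ≤ r) (hrr' : r ≤ r')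
    (heq : ∑ y ∈ s, ⌊r * t y⌋₊ • y = ∑ y ∈ s, ⌊r' * t y⌋₊ • y)
    {x : V n} (hx : x ∈ s) (hgap : r * t x + 1 ≤ r' * t x) : x = 0 := by
  have hmono : ∀ y ∈ s, ⌊r * t y⌋₊ ≤ ⌊r' * t y⌋₊ := fun y hy =>
    Nat.floor_le_floor (mul_le_mul_of_nonneg_right hrr' (ht y hy))
  set c : V n → ℕ := fun y => ⌊r' * t y⌋₊ - ⌊r * t y⌋₊
  have hc : ∑ y ∈ s, c y • y = 0 := by
    have hsplit : ∑ y ∈ s, ⌊r' * t y⌋₊ • y = ∑ y ∈ s, c y • y + ∑ y ∈ s, ⌊r * t y⌋₊ • y := by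
      rw [← Finset.sum_add_distrib]
      exact Finset.sum_congr rfl fun y hy => by rw [← add_nsmul, Nat.sub_add_cancel (hmono y hy)]
    exact add_eq_right.mp (heq ▸ hsplit).symm
  have hcx : c x ≠ 0 := by
    refine Nat.sub_ne_zero_of_lt (Nat.lt_of_succ_le (Nat.le_floor ?_))
    push_cast
    linarith [Nat.floor_le (mul_nonneg hr (ht x hx))]
  have hzero := hpos.eq_zero_of_sum_eq_zero (fun y hy => nsmul_mem (hs y hy) (c y)) hc hx
  exact (smul_eq_zero.mp hzero).resolve_left hcx

theorem IsPositive.eq_zero_of_sum_smul_eq_zero {M : AddSubmonoid (V n)}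
    (hpos : IsPositive (M : Set (V n)))
    (hfin : ∀ R, (Metric.closedBall (0 : V n) R ∩ M).Finite) {s : Finset (V n)}
    (hs : ∀ x ∈ s, x ∈ M) {t : V n → ℝ} (ht : ∀ x ∈ s, 0 ≤ t x)
    (hsum : ∑ x ∈ s, t x • x = 0) {x : V n} (hx : x ∈ s) (htx : 0 < t x) : x = 0 := by
  -- `K t x ≥ 1`, so between the scales `K a < K b` the coefficient of `x` grows by at least `1`.
  set K : ℕ := ⌈(t x)⁻¹⌉₊
  set B := Metric.closedBall (0 : V n) (∑ y ∈ s, ‖y‖) ∩ M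
  let p : ℕ → V n := fun k => ∑ y ∈ s, ⌊((K * k : ℕ) : ℝ) * t y⌋₊ • y
  have hp : ∀ k, p k ∈ B := fun k =>
    ⟨mem_closedBall_zero_iff.mpr (norm_sum_floor_smul_le ht hsum (Nat.cast_nonneg _)),
      sum_mem fun y hy => nsmul_mem (hs y hy) _⟩
  have : Finite B := (hfin _).to_subtype
  obtain ⟨a, b, hab, heq⟩ := Finite.exists_ne_map_eq_of_infinite fun k => (⟨p k, hp k⟩ : B)
  have key : ∀ a b : ℕ, a < b → p a = p b → x = 0 := by
    intro a b hlt hpab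
    have hKt : 1 ≤ (K : ℝ) * t x := by
      calc (1 : ℝ) = (t x)⁻¹ * t x := (inv_mul_cancel₀ htx.ne').symm
        _ ≤ K * t x := mul_le_mul_of_nonneg_right (Nat.le_ceil _) htx.le
    refine hpos.eq_zero_of_sum_floor_smul_eq hs ht (Nat.cast_nonneg _)
      (Nat.cast_le.mpr (Nat.mul_le_mul_left K hlt.le)) hpab hx ?_
    have hb : ((a : ℝ) + 1) ≤ b := by exact_mod_cast hlt
    push_cast
    nlinarith
  rcases Nat.lt_or_gt_of_ne hab with h | h
  · exact key a b h (congrArg Subtype.val heq)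
  · exact key b a h (congrArg Subtype.val heq).symm

theorem IsPositive.zero_notMem_convexHull {M : AddSubmonoid (V n)}
    (hpos : IsPositive (M : Set (V n)))
    (hfin : ∀ R, (Metric.closedBall (0 : V n) R ∩ M).Finite) {s : Finset (V n)}
    (hs : ∀ x ∈ s, x ∈ M) (h0 : (0 : V n) ∉ s) : (0 : V n) ∉ convexHull ℝ (s : Set (V n)) := by
  rw [Finset.mem_convexHull']
  rintro ⟨t, ht, hone, hsum⟩
  obtain ⟨x, hx, htx⟩ : ∃ x ∈ s, 0 < t x :=
    Finset.exists_lt_of_sum_lt (by simp [hone] : ∑ _ ∈ s, (0 : ℝ) < ∑ x ∈ s, t x)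
  exact h0 (hpos.eq_zero_of_sum_smul_eq_zero hfin hs ht hsum hx htx ▸ hx)

theorem nsmul_add_mem_dualSemigroup {S : Set (V n)} {v y : V n}
    (hv : v ∈ dualLattice (diffSet (AddSubmonoid.closure S : Set (V n))))
    (hvS : ∀ s ∈ S, s ≠ 0 → 1 ≤ s ⬝ᵥ v)
    (hy : y ∈ dualLattice (diffSet (AddSubmonoid.closure S : Set (V n))))
    {k : ℕ} (hky : ∀ s ∈ S, -(k : ℝ) ≤ s ⬝ᵥ y) :
    k • v + y ∈ dualSemigroup (AddSubmonoid.closure S : Set (V n)) := by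
  refine ⟨(dualLatticeAddSubgroup _).add_mem ((dualLatticeAddSubgroup _).nsmul_mem hv k) hy,
    mem_dualCone_coneOf_closure fun s hs => ?_⟩
  rw [dotProduct_add, ← Nat.cast_smul_eq_nsmul ℝ, dotProduct_smul, smul_eq_mul]
  rcases eq_or_ne s 0 with rfl | hs0
  · simp
  · nlinarith [hvS s hs hs0, hky s hs]

theorem IsPositive.exists_sum_zsmul_dotProduct_ge_one {M : AddSubmonoid (V n)}
    (hpos : IsPositive (M : Set (V n)))
    (hfin : ∀ R, (Metric.closedBall (0 : V n) R ∩ M).Finite) {S : Finset (V n)}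
    (hSM : ∀ s ∈ S, s ∈ M) {P : Submodule ℝ (V n)} (hSP : ∀ s ∈ S, s ∈ P)
    {ι : Type*} [Fintype ι] {z : ι → V n} (hsep : ∀ x ∈ P, (∀ i, x ⬝ᵥ z i = 0) → x = 0) :
    ∃ m : ι → ℤ, ∀ s ∈ S, s ≠ 0 → 1 ≤ s ⬝ᵥ ∑ i, m i • z i := by
  classical
  let κ : V n →ₗ[ℝ] ι → ℝ := (Matrix.of z).mulVecLin
  have h0 : (0 : ι → ℝ) ∉ convexHull ℝ ((S.erase 0).image κ : Set (ι → ℝ)) := by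
    rw [Finset.coe_image]
    exact zero_notMem_convexHull_image κ (fun s hs => hSP s (Finset.mem_of_mem_erase hs))
      (fun x hx hκx => hsep x hx fun i => (dotProduct_comm _ _).trans (congrFun hκx i))
      (hpos.zero_notMem_convexHull hfin (fun s hs => hSM s (Finset.mem_of_mem_erase hs))
        (Finset.notMem_erase 0 S))
  obtain ⟨a, ha⟩ := exists_dotProduct_pos_of_zero_notMem_convexHull h0
  obtain ⟨m, hm⟩ := exists_int_dotProduct_ge_one ha
  refine ⟨m, fun s hs hs0 => ?_⟩
  convert hm _ (Finset.mem_image_of_mem κ (Finset.mem_erase.mpr ⟨hs0, hs⟩)) using 1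
  simp only [dotProduct_sum, ← Int.cast_smul_eq_zsmul ℝ, dotProduct_smul, smul_eq_mul, κ,
    Matrix.mulVecLin_apply]
  exact Finset.sum_congr rfl fun i _ => by rw [dotProduct_comm]; rfl

theorem IsAffineSemigroup.eq_zero_of_forall_dualSemigroup_dotProduct_eq_zero {Γ : Set (V n)}
    (hΓ : IsAffineSemigroup Γ) (hpos : IsPositive Γ) {w : V n} (hw : w ∈ diffSet Γ)
    (h : ∀ z ∈ dualSemigroup Γ, w ⬝ᵥ z = 0) : w = 0 := by
  obtain ⟨⟨S, rfl⟩, hdisc⟩ := hΓ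
  set M := AddSubmonoid.closure (S : Set (V n))
  set Λ := M.diffSubgroup
  have : DiscreteTopology Λ := AddSubgroup.discreteTopology_of_isDiscreteSet hdisc
  have hSM : ∀ s ∈ S, s ∈ M := fun s hs => AddSubmonoid.subset_closure hs
  obtain ⟨ι, _, z, hz, hsep⟩ := Λ.exists_dualLattice_family_separating
  obtain ⟨m, hm⟩ := hpos.exists_sum_zsmul_dotProduct_ge_one
    (fun R => (Λ.finite_closedBall_inter R).subset
      (Set.inter_subset_inter_right _ fun _ => AddSubmonoid.mem_diffSubgroup_of_mem))
    hSM (fun s hs => subset_span (AddSubmonoid.mem_diffSubgroup_of_mem (hSM s hs))) hsep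
  have hv : ∑ i, m i • z i ∈ dualLatticeAddSubgroup (diffSet (M : Set (V n))) :=
    sum_mem fun i _ => zsmul_mem (hz i) _
  refine hsep w (subset_span hw) fun i => ?_
  set k := ⌈∑ s ∈ S, |s ⬝ᵥ z i|⌉₊
  have hk : ∀ s ∈ S, -(k : ℝ) ≤ s ⬝ᵥ z i := fun s hs => by
    have := Finset.single_le_sum (fun s _ => abs_nonneg (s ⬝ᵥ z i)) hs
    linarith [neg_abs_le (s ⬝ᵥ z i), Nat.le_ceil (∑ s ∈ S, |s ⬝ᵥ z i|)]
  have h1 := h _ (nsmul_add_mem_dualSemigroup hv hm (hz i) hk)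
  have h2 := h _ (nsmul_add_mem_dualSemigroup hv hm (hz i) (k := k + 1) fun s hs => by
    push_cast
    linarith [hk s hs])
  simp only [dotProduct_add, ← Nat.cast_smul_eq_nsmul ℝ, dotProduct_smul, smul_eq_mul] at h1 h2
  push_cast at h2
  linear_combination ((k : ℝ) + 1) * h1 - (k : ℝ) * h2

end

/-- A lift `ι : Γ → Γ̃` of a positive affine semigroup is injective. -/
theorem lift_injective {n N : ℕ} (Γ : Set (V n)) (Γ' : Set (V N))
    (hΓ : IsAffineSemigroup Γ) (hpos : IsPositive Γ)
    (ι : (V n) →ₗ[ℝ] (V N)) (hlift : IsLift Γ Γ' ι) :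
    Set.InjOn ι Γ := by
  intro x hx y hy hxy
  refine sub_eq_zero.mp (hΓ.eq_zero_of_forall_dualSemigroup_dotProduct_eq_zero hpos
    ⟨x, hx, y, hy, rfl⟩ fun z hz => ?_)
  obtain ⟨y', -, hy'⟩ := hlift.adjoint_surj z hz
  rw [sub_dotProduct, hy' x hx, hy' y hy, hxy, sub_self]

end
end
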